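/- arXiv:math/0610130 — 2 statements merged into one kernel-verified Lean document; each statement's English description precedes it below -/
import Mathlib

section
/- Let n ≥ 3 be an integer and let (M, μ) be a measure space with finite total measure V = μ(M), V > 0. Let u, s, w : M → ℝ be measurable functions such that u² , s·u², w, and |u|^(2n/(n-2)) are integrable with respect to μ, with w ≥ 0 almost everywhere and ∫_M u² dμ > 0. Let Y and λ be real numbers with Y ≤ 0, and suppose that (i) ∫_M ( s·u² + 4·((n-1)/(n-2))·w ) dμ = Y · (∫_M |u|^(2n/(n-2)) dμ)^((n-2)/n), and (ii) λ · ∫_M u² dμ ≤ ∫_M ( s·u² + 4·w ) dμ. Then λ · V^(2/n) ≤ Y. -/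
/-!
Since `4 ≤ 4(n-1)/(n-2)` and `w ≥ 0`, (i) and (ii) give `λ ∫ u² ≤ Y ‖u‖²_{2n/(n-2)}`, while Hölder
against the constant `1` gives `∫ u² ≤ ‖u‖²_{2n/(n-2)} V^{2/n}`. The second inequality forces
`‖u‖_{2n/(n-2)} > 0`; as `Y ≤ 0`, the first forces `λ ≤ 0`, so the two chain to
`λ V^{2/n} ‖u‖²_{2n/(n-2)} ≤ Y ‖u‖²_{2n/(n-2)}`.
-/

open MeasureTheory

section

variable {M : Type*} [MeasurableSpace M] {μ : Measure M}

theorem integral_add_mul_le_integral_add_mul {f w : M → ℝ} (hf : Integrable f μ)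
    (hw : Integrable w μ) (hw0 : 0 ≤ᵐ[μ] w) {a b : ℝ} (hab : a ≤ b) :
    ∫ x, (f x + a * w x) ∂μ ≤ ∫ x, (f x + b * w x) ∂μ := by
  refine integral_mono_ae (hf.add (hw.const_mul a)) (hf.add (hw.const_mul b)) ?_
  filter_upwards [hw0] with x hx
  gcongr

variable [IsFiniteMeasure μ]

theorem integral_le_integral_rpow_mul_measureReal_rpow {p : ℝ} (hp : 1 < p) {f : M → ℝ}
    (hf0 : 0 ≤ᵐ[μ] f) (hf : MemLp f (ENNReal.ofReal p) μ) :
    ∫ x, f x ∂μ ≤ (∫ x, f x ^ p ∂μ) ^ p⁻¹ * μ.real Set.univ ^ (1 - p⁻¹) := by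
  have hpq := Real.HolderConjugate.conjExponent hp
  have h := integral_mul_le_Lp_mul_Lq_of_nonneg hpq hf0 (g := fun _ => (1 : ℝ))
    (ae_of_all _ fun _ => zero_le_one) hf (memLp_const 1)
  simpa [hpq.one_sub_inv] using h

theorem integral_sq_le_integral_abs_rpow_mul_measureReal_rpow {q : ℝ} (hq : 2 < q) {u : M → ℝ}
    (hu : AEStronglyMeasurable u μ) (hint : Integrable (fun x => |u x| ^ q) μ) :
    ∫ x, u x ^ 2 ∂μ ≤ (∫ x, |u x| ^ q ∂μ) ^ (2 / q) * μ.real Set.univ ^ (1 - 2 / q) := by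
  have hq0 : 0 < q := by linarith
  have hmem : MemLp u (ENNReal.ofReal q) μ := by
    rw [← integrable_norm_rpow_iff hu (by simpa using hq0) ENNReal.ofReal_ne_top,
      ENNReal.toReal_ofReal hq0.le]
    simpa only [Real.norm_eq_abs] using hint
  have hsq : MemLp (fun x => u x ^ 2) (ENNReal.ofReal (q / 2)) μ := by
    have h := hmem.norm_rpow_div 2
    rw [← ENNReal.ofReal_ofNat 2, ← ENNReal.ofReal_div_of_pos two_pos] at h
    simpa only [ENNReal.toReal_ofReal zero_le_two, Real.norm_eq_abs, Real.rpow_two, sq_abs]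
      using h
  have hpow : ∀ x, (u x ^ 2) ^ (q / 2) = |u x| ^ q := fun x => by
    rw [← sq_abs, ← Real.rpow_two, ← Real.rpow_mul (abs_nonneg _)]
    congr 1
    field_simp
  have h := integral_le_integral_rpow_mul_measureReal_rpow (by linarith : 1 < q / 2)
    (ae_of_all _ fun x => sq_nonneg (u x)) hsq
  simpa only [hpow, inv_div] using h

end

theorem stmt_3_general {M : Type*} [MeasurableSpace M] (μ : Measure M) [IsFiniteMeasure μ]
    (n : ℕ) (hn : 3 ≤ n)
    (u s w : M → ℝ) (hu : Measurable u)
    (hsu2 : Integrable (fun x => s x * (u x) ^ 2) μ)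
    (hwint : Integrable w μ)
    (hint : Integrable (fun x => |u x| ^ ((2 * (n : ℝ)) / ((n : ℝ) - 2))) μ)
    (hw0 : ∀ᵐ x ∂μ, 0 ≤ w x)
    (hu2pos : 0 < ∫ x, (u x) ^ 2 ∂μ)
    (Y lam : ℝ) (hY : Y ≤ 0)
    (hi : ∫ x, (s x * (u x) ^ 2 + 4 * (((n : ℝ) - 1) / ((n : ℝ) - 2)) * w x) ∂μ =
      Y * (∫ x, |u x| ^ ((2 * (n : ℝ)) / ((n : ℝ) - 2)) ∂μ) ^ (((n : ℝ) - 2) / n))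
    (hii : lam * ∫ x, (u x) ^ 2 ∂μ ≤ ∫ x, (s x * (u x) ^ 2 + 4 * w x) ∂μ) :
    lam * (μ Set.univ).toReal ^ ((2 : ℝ) / n) ≤ Y := by
  have hn' : (3 : ℝ) ≤ n := by exact_mod_cast hn
  set I := ∫ x, (u x) ^ 2 ∂μ
  set J := (∫ x, |u x| ^ ((2 * (n : ℝ)) / ((n : ℝ) - 2)) ∂μ) ^ (((n : ℝ) - 2) / n)
  set W := (μ Set.univ).toReal ^ ((2 : ℝ) / n)
  have hJ0 : 0 ≤ J := Real.rpow_nonneg (integral_nonneg fun _ => by positivity) _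
  have energy : lam * I ≤ Y * J := by
    have hcoef : (4 : ℝ) ≤ 4 * ((n - 1) / (n - 2)) := by
      rw [le_mul_iff_one_le_right four_pos, one_le_div (by linarith)]
      linarith
    exact hii.trans ((integral_add_mul_le_integral_add_mul hsu2 hwint hw0 hcoef).trans_eq hi)
  have holder : I ≤ J * W := by
    have hn2 : (0 : ℝ) < n - 2 := by linarith
    convert integral_sq_le_integral_abs_rpow_mul_measureReal_rpow
      (q := 2 * n / (n - 2)) (by rw [lt_div_iff₀ hn2]; linarith)
      hu.aestronglyMeasurable hint using 3
    · field_simp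
    · rfl
    · field_simp
      ring
  have hlam : lam ≤ 0 := by nlinarith
  have hJ : 0 < J := by
    have hW : 0 ≤ W := by positivity
    nlinarith
  refine le_of_mul_le_mul_right ?_ hJ
  calc lam * W * J = lam * (J * W) := by ring
    _ ≤ lam * I := mul_le_mul_of_nonpos_left holder hlam
    _ ≤ Y * J := energy

/-- Analytic core of Proposition 2 of the paper, abstracted to a measure space:
if `Y ≤ 0`, `∫ (s·u² + 4·((n-1)/(n-2))·w) dμ = Y · (∫ |u|^(2n/(n-2)) dμ)^((n-2)/n)`
and `λ · ∫ u² dμ ≤ ∫ (s·u² + 4·w) dμ`, then `λ · V^(2/n) ≤ Y`. -/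
theorem stmt_3 {M : Type*} [MeasurableSpace M] (μ : Measure M) [IsFiniteMeasure μ]
    (n : ℕ) (hn : 3 ≤ n) (hV : 0 < (μ Set.univ).toReal)
    (u s w : M → ℝ) (hu : Measurable u) (hs : Measurable s) (hw : Measurable w)
    (hu2 : Integrable (fun x => (u x) ^ 2) μ)
    (hsu2 : Integrable (fun x => s x * (u x) ^ 2) μ)
    (hwint : Integrable w μ)
    (hint : Integrable (fun x => |u x| ^ ((2 * (n : ℝ)) / ((n : ℝ) - 2))) μ)
    (hw0 : ∀ᵐ x ∂μ, 0 ≤ w x)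
    (hu2pos : 0 < ∫ x, (u x) ^ 2 ∂μ)
    (Y lam : ℝ) (hY : Y ≤ 0)
    (hi : ∫ x, (s x * (u x) ^ 2 + 4 * (((n : ℝ) - 1) / ((n : ℝ) - 2)) * w x) ∂μ =
      Y * (∫ x, |u x| ^ ((2 * (n : ℝ)) / ((n : ℝ) - 2)) ∂μ) ^ (((n : ℝ) - 2) / n))
    (hii : lam * ∫ x, (u x) ^ 2 ∂μ ≤ ∫ x, (s x * (u x) ^ 2 + 4 * w x) ∂μ) :
    lam * (μ Set.univ).toReal ^ ((2 : ℝ) / n) ≤ Y :=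
  stmt_3_general μ n hn u s w hu hsu2 hwint hint hw0 hu2pos Y lam hY hi hii
end

section
/- Let n ≥ 3 be an integer and let (M, μ) be a measure space with finite total measure V = μ(M), V > 0. Let u, s, w : M → ℝ be measurable functions such that u², s·u², w, and |u|^(2n/(n-2)) are integrable with respect to μ, with w ≥ 0 almost everywhere and ∫_M u² dμ > 0. Let Y and λ be real numbers with Y < 0, and suppose that (i) ∫_M ( s·u² + 4·((n-1)/(n-2))·w ) dμ = Y · (∫_M |u|^(2n/(n-2)) dμ)^((n-2)/n), and (ii) λ · ∫_M u² dμ ≤ ∫_M ( s·u² + 4·w ) dμ. If moreover λ · V^(2/n) = Y, then w = 0 almost everywhere and |u| is almost everywhere equal to a constant. -/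
/-! With `q = n/(n-2)`, Jensen's inequality for the strictly convex `t ↦ t ^ q` applied to `u²`
is the Hölder bound `∫ u² ≤ V^(2/n) (∫ |u|^(2n/(n-2)))^((n-2)/n)`, with equality only when `u²`
is a.e. constant. As `λ V^(2/n) = Y < 0` forces `λ < 0`, (i) and (ii) combine into
`∫ s u² + 4 (n-1)/(n-2) ∫ w = λ V^(2/n) (∫ |u|^(2n/(n-2)))^((n-2)/n) ≤ λ ∫ u² ≤ ∫ s u² + 4 ∫ w`,
so `∫ w ≤ 0` and every inequality in the chain is an equality. -/

open MeasureTheory Function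

namespace MeasureTheory

variable {α : Type*} [MeasurableSpace α] {μ : Measure α} {f g : α → ℝ} {q : ℝ}

theorem average_nonneg_of_ae (hf : ∀ᵐ x ∂μ, 0 ≤ f x) : 0 ≤ ⨍ x, f x ∂μ := by
  rw [average_eq, smul_eq_mul]
  exact mul_nonneg (inv_nonneg.2 measureReal_nonneg) (integral_nonneg_of_ae hf)

variable [IsFiniteMeasure μ]

theorem average_le_average_rpow_rpow_inv [NeZero μ] (hq : 1 ≤ q) (hf0 : ∀ᵐ x ∂μ, 0 ≤ f x)
    (hf : Integrable f μ) (hfq : Integrable (fun x => f x ^ q) μ) :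
    ⨍ x, f x ∂μ ≤ (⨍ x, f x ^ q ∂μ) ^ q⁻¹ := by
  rw [Real.le_rpow_inv_iff_of_pos (average_nonneg_of_ae hf0)
    (average_nonneg_of_ae (hf0.mono fun _ hx => Real.rpow_nonneg hx _)) (by linarith)]
  exact (convexOn_rpow hq).map_average_le (Real.continuous_rpow_const (by linarith)).continuousOn
    isClosed_Ici hf0 hf hfq

theorem ae_eq_const_of_average_rpow_rpow_inv_le (hq : 1 < q) (hf0 : ∀ᵐ x ∂μ, 0 ≤ f x)
    (hf : Integrable f μ) (hfq : Integrable (fun x => f x ^ q) μ)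
    (h : (⨍ x, f x ^ q ∂μ) ^ q⁻¹ ≤ ⨍ x, f x ∂μ) :
    f =ᵐ[μ] const α (⨍ x, f x ∂μ) := by
  refine ((strictConvexOn_rpow hq).ae_eq_const_or_map_average_lt
    (Real.continuous_rpow_const (by linarith)).continuousOn isClosed_Ici hf0 hf hfq).resolve_right
    fun hlt => hlt.not_ge ?_
  rwa [Real.rpow_inv_le_iff_of_pos
    (average_nonneg_of_ae (hf0.mono fun _ hx => Real.rpow_nonneg hx _))
    (average_nonneg_of_ae hf0) (by linarith)] at h

theorem measureReal_univ_rpow_mul_integral_rpow_eq [NeZero μ] {t : ℝ}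
    (hg : ∀ᵐ x ∂μ, 0 ≤ g x) :
    μ.real Set.univ ^ (1 - t) * (∫ x, g x ∂μ) ^ t = μ.real Set.univ * (⨍ x, g x ∂μ) ^ t := by
  have hV : 0 < μ.real Set.univ := measureReal_univ_pos
  rw [← measure_smul_average, smul_eq_mul, Real.mul_rpow hV.le (average_nonneg_of_ae hg),
    ← mul_assoc, ← Real.rpow_add hV, sub_add_cancel, Real.rpow_one]

theorem integral_le_measureReal_univ_rpow_mul_integral_rpow (hq : 1 ≤ q)
    (hf0 : ∀ᵐ x ∂μ, 0 ≤ f x) (hf : Integrable f μ) (hfq : Integrable (fun x => f x ^ q) μ) :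
    ∫ x, f x ∂μ ≤ μ.real Set.univ ^ (1 - q⁻¹) * (∫ x, f x ^ q ∂μ) ^ q⁻¹ := by
  rcases eq_zero_or_neZero μ with rfl | _
  · simp only [integral_zero_measure, measureReal_zero_apply]; positivity
  rw [measureReal_univ_rpow_mul_integral_rpow_eq (hf0.mono fun _ hx => Real.rpow_nonneg hx _),
    ← measure_smul_average, smul_eq_mul]
  exact mul_le_mul_of_nonneg_left (average_le_average_rpow_rpow_inv hq hf0 hf hfq)
    measureReal_nonneg

theorem ae_eq_const_of_measureReal_univ_rpow_mul_integral_rpow_le [NeZero μ] (hq : 1 < q)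
    (hf0 : ∀ᵐ x ∂μ, 0 ≤ f x) (hf : Integrable f μ) (hfq : Integrable (fun x => f x ^ q) μ)
    (h : μ.real Set.univ ^ (1 - q⁻¹) * (∫ x, f x ^ q ∂μ) ^ q⁻¹ ≤ ∫ x, f x ∂μ) :
    f =ᵐ[μ] const α (⨍ x, f x ∂μ) := by
  rw [measureReal_univ_rpow_mul_integral_rpow_eq (hf0.mono fun _ hx => Real.rpow_nonneg hx _),
    ← measure_smul_average, smul_eq_mul] at h
  exact ae_eq_const_of_average_rpow_rpow_inv_le hq hf0 hf hfq
    (le_of_mul_le_mul_left h measureReal_univ_pos)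

end MeasureTheory

theorem stmt_4_general {M : Type*} [MeasurableSpace M] (μ : Measure M) [IsFiniteMeasure μ]
    (n : ℕ) (hn : 3 ≤ n) (hV : 0 < (μ Set.univ).toReal)
    (u s w : M → ℝ)
    (hu2 : Integrable (fun x => (u x) ^ 2) μ)
    (hsu2 : Integrable (fun x => s x * (u x) ^ 2) μ)
    (hwint : Integrable w μ)
    (hint : Integrable (fun x => |u x| ^ ((2 * (n : ℝ)) / ((n : ℝ) - 2))) μ)
    (hw0 : ∀ᵐ x ∂μ, 0 ≤ w x)
    (Y lam : ℝ) (hY : Y < 0)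
    (hi : ∫ x, (s x * (u x) ^ 2 + 4 * (((n : ℝ) - 1) / ((n : ℝ) - 2)) * w x) ∂μ =
      Y * (∫ x, |u x| ^ ((2 * (n : ℝ)) / ((n : ℝ) - 2)) ∂μ) ^ (((n : ℝ) - 2) / n))
    (hii : lam * ∫ x, (u x) ^ 2 ∂μ ≤ ∫ x, (s x * (u x) ^ 2 + 4 * w x) ∂μ)
    (heq : lam * (μ Set.univ).toReal ^ ((2 : ℝ) / n) = Y) :
    (∀ᵐ x ∂μ, w x = 0) ∧ ∃ c : ℝ, ∀ᵐ x ∂μ, |u x| = c := by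
  have hn2 : (0 : ℝ) < n - 2 := by
    have : (3 : ℝ) ≤ n := by exact_mod_cast hn
    linarith
  have : NeZero μ := ⟨fun h => by simp [h] at hV⟩
  set q : ℝ := n / (n - 2) with hq_def
  have hq : 1 < q := by rw [hq_def, lt_div_iff₀ hn2]; linarith
  have hq_inv : q⁻¹ = (n - 2) / n := inv_div _ _
  have hq_conj : 1 - q⁻¹ = 2 / n := by rw [hq_inv]; field_simp; ring
  have hpow (x : M) : |u x| ^ (2 * (n : ℝ) / (n - 2)) = (u x ^ 2) ^ q := by
    rw [← sq_abs, ← Real.rpow_natCast, ← Real.rpow_mul (abs_nonneg _), mul_div_assoc]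
    norm_num [q]
  simp only [hpow] at hint hi
  have hsq : ∀ᵐ x ∂μ, 0 ≤ u x ^ 2 := ae_of_all _ fun x => sq_nonneg _
  have holder := integral_le_measureReal_univ_rpow_mul_integral_rpow hq.le hsq hu2 hint
  rw [hq_conj, hq_inv] at holder
  set I := ∫ x, u x ^ 2 ∂μ
  set H := μ.real Set.univ ^ (2 / (n : ℝ)) * (∫ x, (u x ^ 2) ^ q ∂μ) ^ (((n : ℝ) - 2) / n)
  set C : ℝ := 4 * ((n - 1) / (n - 2))
  have hC : 4 < C := by
    have : (1 : ℝ) < (n - 1) / (n - 2) := by rw [lt_div_iff₀ hn2]; linarith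
    linarith
  have hlam : lam < 0 := by
    have : 0 < (μ Set.univ).toReal ^ ((2 : ℝ) / n) := Real.rpow_pos_of_pos hV _
    nlinarith
  have hW0 : 0 ≤ ∫ x, w x ∂μ := integral_nonneg_of_ae hw0
  have hi' : ∫ x, s x * u x ^ 2 ∂μ + C * ∫ x, w x ∂μ = lam * H := by
    rw [← integral_const_mul, ← integral_add hsu2 (hwint.const_mul _), hi, ← heq]
    simp only [H, measureReal_def]
    ring
  have hii' : lam * I ≤ ∫ x, s x * u x ^ 2 ∂μ + 4 * ∫ x, w x ∂μ := by
    rwa [← integral_const_mul (4 : ℝ) w, ← integral_add hsu2 (hwint.const_mul _)]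
  have hlamH : lam * H ≤ lam * I := mul_le_mul_of_nonpos_left holder hlam.le
  have hCW : C * ∫ x, w x ∂μ ≤ 4 * ∫ x, w x ∂μ := by linarith
  have hW : ∫ x, w x ∂μ = 0 := le_antisymm (by nlinarith) hW0
  have hHI : H ≤ I := (mul_le_mul_left_of_neg hlam).1 (by
    rw [hW, mul_zero] at hi' hii'; linarith)
  refine ⟨(integral_eq_zero_iff_of_nonneg_ae hw0 hwint).1 hW, √(⨍ x, u x ^ 2 ∂μ), ?_⟩
  filter_upwards [ae_eq_const_of_measureReal_univ_rpow_mul_integral_rpow_le hq hsq hu2 hint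
    (by rwa [hq_conj, hq_inv])] with x hx
  rw [← Real.sqrt_sq_eq_abs, hx, const_apply]

/-- Equality analysis in the proof of Proposition 2 of the paper, abstracted to a
measure space: if `Y < 0` and `λ · V^(2/n) = Y` in the chain of inequalities, then
`w = 0` a.e. and `|u|` is a.e. equal to a constant. -/
theorem stmt_4 {M : Type*} [MeasurableSpace M] (μ : Measure M) [IsFiniteMeasure μ]
    (n : ℕ) (hn : 3 ≤ n) (hV : 0 < (μ Set.univ).toReal)
    (u s w : M → ℝ) (hu : Measurable u) (hs : Measurable s) (hw : Measurable w)
    (hu2 : Integrable (fun x => (u x) ^ 2) μ)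
    (hsu2 : Integrable (fun x => s x * (u x) ^ 2) μ)
    (hwint : Integrable w μ)
    (hint : Integrable (fun x => |u x| ^ ((2 * (n : ℝ)) / ((n : ℝ) - 2))) μ)
    (hw0 : ∀ᵐ x ∂μ, 0 ≤ w x)
    (hu2pos : 0 < ∫ x, (u x) ^ 2 ∂μ)
    (Y lam : ℝ) (hY : Y < 0)
    (hi : ∫ x, (s x * (u x) ^ 2 + 4 * (((n : ℝ) - 1) / ((n : ℝ) - 2)) * w x) ∂μ =
      Y * (∫ x, |u x| ^ ((2 * (n : ℝ)) / ((n : ℝ) - 2)) ∂μ) ^ (((n : ℝ) - 2) / n))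
    (hii : lam * ∫ x, (u x) ^ 2 ∂μ ≤ ∫ x, (s x * (u x) ^ 2 + 4 * w x) ∂μ)
    (heq : lam * (μ Set.univ).toReal ^ ((2 : ℝ) / n) = Y) :
    (∀ᵐ x ∂μ, w x = 0) ∧ ∃ c : ℝ, ∀ᵐ x ∂μ, |u x| = c :=
  stmt_4_general μ n hn hV u s w hu2 hsu2 hwint hint hw0 Y lam hY hi hii heq
end
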